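/- arXiv:1406.0159 — 2 statements merged into one kernel-verified Lean document; each statement's English description precedes it below -/
import Mathlib

section
/- For every integer T ≥ 0 and every nonnegative integer n, the dimension over K of the space e_i A e_{i+n} (the span of paths from vertex i to vertex i+n modulo the relations) equals: 2T+1 if n ≡ 0 (mod 4); 2T+2 if n ≡ 1 (mod 4); 2T+1 if n ≡ 2 (mod 4); and 2T if n ≡ 3 (mod 4). In particular this dimension is independent of i, and the total dimension of A is 4·(2T+1) + 4·(2T+2) + 4·(2T+1) + 4·(2T) = 32T+16. -/
/-!
The elements `e_i x_l^s` span `A`: the vertices and arrows are among them, and the relations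
`x_l e_j = e_{j-1} x_l`, `x_l x_{l+1} = 0` make their products again of this form (or zero). The
socle relation expresses `e_i x_1^{4T+2}` as a nonzero multiple of `e_i x_0^{4T+2}` and kills
`e_i x_l^s` for `s > 4T+2`, which leaves the normal words of the stated basis.
They are linearly independent because `A` acts on the vector space with exactly these normal
words as basis, by the rules of left multiplication; the relations hold for this action, and
applying an element to `∑ e_t` reads off its normal form. The idempotents `e_i` act diagonally
on the basis, so `dim e_i A e_{i+n}` counts normal words of length `≡ n (mod 4)`.
-/

noncomputable section

/-- Generators: the vertices `e_i` (`i : ZMod 4`) and the arrows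
`a_{l,m} : e_m → e_{m+1}` (`l : ZMod 2`, `m : ZMod 4`). -/
abbrev QGen : Type := (ZMod 4) ⊕ (ZMod 2 × ZMod 4)

variable (K : Type*) [Field K]

/-- The vertex generator `e_i` in the free algebra. -/
def vgen (i : ZMod 4) : FreeAlgebra K QGen := FreeAlgebra.ι K (Sum.inl i)

/-- The arrow generator `a_{l,m}` in the free algebra. -/
def agen (l : ZMod 2) (m : ZMod 4) : FreeAlgebra K QGen := FreeAlgebra.ι K (Sum.inr (l, m))

/-- `x_l = Σ_m a_{l,m}` in the free algebra. -/
def xgen (l : ZMod 2) : FreeAlgebra K QGen := ∑ m : ZMod 4, agen K l m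

/-- Reduction of a vertex index mod 4 to an `x`-index mod 2. -/
def toL (i : ZMod 4) : ZMod 2 := (i.val : ZMod 2)

/-- The defining relations of `A_T(q_0,q_1,q_2,q_3)`: the path-algebra relations
of the cyclic quiver with vertices `e_0,…,e_3` and arrows
`a_{0,m}, a_{1,m} : e_m → e_{m+1}`, together with `x_l x_{l+1} = 0` and
`e_i (q_i x_i^{4T+2} + x_{i+1}^{4T+2}) = 0`. -/
inductive ARel (T : ℕ) (q : ZMod 4 → K) : FreeAlgebra K QGen → FreeAlgebra K QGen → Prop
  | vert (i j : ZMod 4) :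
      ARel T q (vgen K i * vgen K j) (if i = j then vgen K i else 0)
  | sum_vert : ARel T q (∑ i : ZMod 4, vgen K i) 1
  | left (l : ZMod 2) (m : ZMod 4) : ARel T q (vgen K m * agen K l m) (agen K l m)
  | right (l : ZMod 2) (m : ZMod 4) : ARel T q (agen K l m * vgen K (m + 1)) (agen K l m)
  | left_zero (l : ZMod 2) (m j : ZMod 4) (h : j ≠ m) : ARel T q (vgen K j * agen K l m) 0
  | right_zero (l : ZMod 2) (m j : ZMod 4) (h : j ≠ m + 1) : ARel T q (agen K l m * vgen K j) 0
  | zigzag (l : ZMod 2) : ARel T q (xgen K l * xgen K (l + 1)) 0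
  | socle (i : ZMod 4) :
      ARel T q (vgen K i * (q i • xgen K (toL i) ^ (4 * T + 2)
        + xgen K (toL (i + 1)) ^ (4 * T + 2))) 0

/-- The self-injective special biserial algebra `A = A_T(q_0,q_1,q_2,q_3)`. -/
def AT (T : ℕ) (q : ZMod 4 → K) : Type _ := RingQuot (ARel K T q)

instance (T : ℕ) (q : ZMod 4 → K) : Ring (AT K T q) := inferInstanceAs (Ring (RingQuot _))
instance (T : ℕ) (q : ZMod 4 → K) : Algebra K (AT K T q) :=
  inferInstanceAs (Algebra K (RingQuot _))

/-- The vertex idempotent `e_i` in `A`. -/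
def Ae (T : ℕ) (q : ZMod 4 → K) (i : ZMod 4) : AT K T q :=
  RingQuot.mkAlgHom K (ARel K T q) (vgen K i)

/-- The arrow `a_{l,m}` in `A`. -/
def Aa (T : ℕ) (q : ZMod 4 → K) (l : ZMod 2) (m : ZMod 4) : AT K T q :=
  RingQuot.mkAlgHom K (ARel K T q) (agen K l m)

/-- `x_l = Σ_m a_{l,m}` in `A`. -/
def Ax (T : ℕ) (q : ZMod 4 → K) (l : ZMod 2) : AT K T q :=
  RingQuot.mkAlgHom K (ARel K T q) (xgen K l)

/-- The `K`-linear map `a ↦ e_i · a · e_t` on `A`, whose range is the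
subspace `e_i A e_t`. -/
def sandwich (T : ℕ) (q : ZMod 4 → K) (i t : ZMod 4) : AT K T q →ₗ[K] AT K T q :=
  (LinearMap.mulLeft K (Ae K T q i)).comp (LinearMap.mulRight K (Ae K T q t))



lemma zmod_two_eq_zero_or_one (l : ZMod 2) : l = 0 ∨ l = 1 := by
  revert l; decide

lemma zmod_two_add_one_ne (l : ZMod 2) : l + 1 ≠ l := by
  revert l; decide

lemma toL_add_one (i : ZMod 4) : toL (i + 1) = toL i + 1 := by
  revert i; decide

theorem Submodule.span_eq_top_of_adjoin_eq_top {R A : Type*} [CommSemiring R] [Semiring A]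
    [Algebra R A] {S : Set A} (hS : Algebra.adjoin R S = ⊤) (h1 : 1 ∈ span R S)
    (hmul : ∀ a ∈ S, ∀ b ∈ S, a * b ∈ span R S) : span R S = ⊤ := by
  have hmul' : span R S * span R S ≤ span R S := by
    rw [span_mul_span, span_le]
    rintro _ ⟨a, ha, b, hb, rfl⟩
    exact hmul a ha b hb
  let P := (span R S).toSubalgebra h1 fun a b ha hb => mul_le.1 hmul' a ha b hb
  have hP : Algebra.adjoin R S ≤ P := Algebra.adjoin_le subset_span
  rw [hS, top_le_iff] at hP
  exact eq_top_iff.2 fun z _ => show z ∈ P by simp [hP]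

theorem LinearMap.finrank_range_eq_card_of_basis {R V ι : Type*} [DivisionRing R]
    [AddCommGroup V] [Module R V] [DecidableEq ι] (b : Module.Basis ι R V) (f : V →ₗ[R] V)
    (s : Finset ι) (hf : ∀ j, f (b j) = if j ∈ s then b j else 0) :
    Module.finrank R (LinearMap.range f) = s.card := by
  have hrange : LinearMap.range f = Submodule.span R (Set.range fun j : s => b j) := by
    apply le_antisymm
    · rw [LinearMap.range_eq_map, ← b.span_eq, Submodule.map_span, Submodule.span_le]
      rintro _ ⟨_, ⟨j, rfl⟩, rfl⟩
      rw [SetLike.mem_coe, hf]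
      split_ifs with hj
      · exact Submodule.subset_span ⟨⟨j, hj⟩, rfl⟩
      · exact zero_mem _
    · rw [Submodule.span_le]
      rintro _ ⟨j, rfl⟩
      exact ⟨b j, by rw [hf, if_pos j.2]⟩
  rw [hrange]
  exact (finrank_span_eq_card (b.linearIndependent.comp _ Subtype.val_injective)).trans
    (Fintype.card_coe s)

/-- The coefficient `c` with `e_i x_l^{4T+2} = c • e_i x_0^{4T+2}`, read off from the socle
relation `e_i (q_i x_{toL i}^{4T+2} + x_{toL i + 1}^{4T+2}) = 0`. -/
def topCoeff (q : ZMod 4 → K) (i : ZMod 4) (l : ZMod 2) : K :=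
  if l = 0 then 1 else if toL i = 0 then -q i else -(q i)⁻¹

lemma topCoeff_ne_zero {q : ZMod 4 → K} {i : ZMod 4} (hq : q i ≠ 0) (l : ZMod 2) :
    topCoeff K q i l ≠ 0 := by
  unfold topCoeff
  split_ifs <;> simp [hq]

lemma socle_topCoeff {q : ZMod 4 → K} {i : ZMod 4} (hq : q i ≠ 0) :
    q i * topCoeff K q i (toL i) + topCoeff K q i (toL i + 1) = 0 := by
  unfold topCoeff
  obtain h | h := zmod_two_eq_zero_or_one (toL i) <;>
    simp [h, hq, show (1 : ZMod 2) + 1 = 0 from rfl]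

/-- The arrows `a_{l,m}` are not part of the data: they are recovered as `e_m x_l`. -/
structure ATRelations {B : Type*} [Ring B] [Algebra K B] (T : ℕ) (q : ZMod 4 → K)
    (e : ZMod 4 → B) (x : ZMod 2 → B) : Prop where
  e_mul_e : ∀ i j, e i * e j = if i = j then e i else 0
  sum_e : ∑ i, e i = 1
  x_mul_e : ∀ l j, x l * e j = e (j - 1) * x l
  x_mul_x_add_one : ∀ l, x l * x (l + 1) = 0
  e_mul_socle : ∀ i, e i * (q i • x (toL i) ^ (4 * T + 2) + x (toL i + 1) ^ (4 * T + 2)) = 0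

namespace ATRelations

variable {K} {B : Type*} [Ring B] [Algebra K B] {T : ℕ} {q : ZMod 4 → K}
  {e : ZMod 4 → B} {x : ZMod 2 → B}

lemma x_pow_mul_e (h : ATRelations K T q e x) (l : ZMod 2) (s : ℕ) (j : ZMod 4) :
    x l ^ s * e j = e (j - s) * x l ^ s := by
  induction s generalizing j with
  | zero => simp
  | succ s ih =>
    rw [pow_succ, mul_assoc, h.x_mul_e, ← mul_assoc, ih, mul_assoc, ← pow_succ]
    push_cast
    ring_nf

lemma x_pow_mul_x_pow (h : ATRelations K T q e x) {l l' : ZMod 2} (hl : l ≠ l')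
    {s s' : ℕ} (hs : s ≠ 0) (hs' : s' ≠ 0) : x l ^ s * x l' ^ s' = 0 := by
  obtain ⟨s, rfl⟩ := Nat.exists_eq_succ_of_ne_zero hs
  obtain ⟨s', rfl⟩ := Nat.exists_eq_succ_of_ne_zero hs'
  have hl' : l' = l + 1 := by revert l l'; decide
  rw [pow_succ, pow_succ', mul_assoc, ← mul_assoc (x l), hl', h.x_mul_x_add_one, zero_mul,
    mul_zero]

lemma e_mul_e_mul_x_pow_mul_e (h : ATRelations K T q e x) (i j t : ZMod 4) (l : ZMod 2)
    (s : ℕ) : e i * (e j * x l ^ s * e t) = if i = j ∧ j + s = t then e j * x l ^ s else 0 := by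
  rw [mul_assoc, h.x_pow_mul_e, ← mul_assoc, ← mul_assoc, h.e_mul_e]
  rcases eq_or_ne i j with rfl | hij
  · rw [if_pos rfl, h.e_mul_e]
    by_cases hit : i + s = t <;> simp [hit, eq_sub_iff_add_eq]
  · simp [hij]

lemma monomial_mul_monomial (h : ATRelations K T q e x) (i j : ZMod 4) (s s' : ℕ)
    (l l' : ZMod 2) : e i * x l ^ s * (e j * x l' ^ s') =
      if i + s = j then e i * (x l ^ s * x l' ^ s') else 0 := by
  rw [mul_assoc, ← mul_assoc (x l ^ s), h.x_pow_mul_e, ← mul_assoc, ← mul_assoc, h.e_mul_e]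
  simp only [eq_sub_iff_add_eq]
  split_ifs <;> simp [mul_assoc]

lemma e_mul_x_pow_top (h : ATRelations K T q e x) {i : ZMod 4} (hq : q i ≠ 0) (l : ZMod 2) :
    e i * x l ^ (4 * T + 2) = topCoeff K q i l • (e i * x 0 ^ (4 * T + 2)) := by
  have hs := h.e_mul_socle i
  rw [mul_add, mul_smul_comm] at hs
  unfold topCoeff
  obtain rfl | rfl := zmod_two_eq_zero_or_one l
  · simp
  obtain hi | hi := zmod_two_eq_zero_or_one (toL i) <;>
    simp only [hi, show (0 : ZMod 2) + 1 = 1 from rfl, show (1 : ZMod 2) + 1 = 0 from rfl] at hs ⊢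
  · simpa using eq_neg_of_add_eq_zero_right hs
  · simp only [one_ne_zero, if_false]
    rw [eq_neg_of_add_eq_zero_right hs, smul_neg, neg_smul, neg_neg, smul_smul,
      inv_mul_cancel₀ hq, one_smul]

lemma e_mul_x_pow_eq_zero (h : ATRelations K T q e x) {i : ZMod 4} (hq : q i ≠ 0) (l : ZMod 2)
    {s : ℕ} (hs : 4 * T + 2 < s) : e i * x l ^ s = 0 := by
  obtain ⟨k, rfl⟩ := Nat.exists_eq_add_of_lt hs
  -- `e_i x_l^{4T+2}` is a multiple of `e_i x_{l+1}^{4T+2}`, which `x_l` annihilates.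
  have hmul : e i * x l ^ (4 * T + 2) =
      (topCoeff K q i l * (topCoeff K q i (l + 1))⁻¹) • (e i * x (l + 1) ^ (4 * T + 2)) := by
    rw [h.e_mul_x_pow_top hq l, h.e_mul_x_pow_top hq (l + 1), smul_smul, mul_assoc,
      inv_mul_cancel₀ (topCoeff_ne_zero K hq _), mul_one]
  have hx : x (l + 1) ^ (4 * T + 2) * x l = 0 := by
    simpa using h.x_pow_mul_x_pow (zmod_two_add_one_ne l) (s' := 1) (by omega) one_ne_zero
  rw [show 4 * T + 2 + k + 1 = 4 * T + 2 + 1 + k by omega, pow_add, pow_succ, ← mul_assoc,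
    ← mul_assoc, hmul, smul_mul_assoc, mul_assoc, hx, mul_zero, smul_zero, zero_mul]

def freeLift (e : ZMod 4 → B) (x : ZMod 2 → B) : FreeAlgebra K QGen →ₐ[K] B :=
  FreeAlgebra.lift K (Sum.elim e fun p => e p.2 * x p.1)

lemma freeLift_xgen (h : ATRelations K T q e x) (l : ZMod 2) :
    freeLift e x (xgen K l) = x l := by
  simp [freeLift, xgen, agen, ← Finset.sum_mul, h.sum_e]

lemma freeLift_rel (h : ATRelations K T q e x) {a b : FreeAlgebra K QGen}
    (hab : ARel K T q a b) : freeLift e x a = freeLift e x b := by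
  have he (i) : freeLift e x (vgen K i) = e i := by simp [freeLift, vgen]
  have ha (l m) : freeLift e x (agen K l m) = e m * x l := by simp [freeLift, agen]
  induction hab with
  | vert i j => simp only [map_mul, he, h.e_mul_e, apply_ite (freeLift e x), map_zero]
  | sum_vert => simp only [map_sum, he, h.sum_e, map_one]
  | left l m => rw [map_mul, he, ha, ← mul_assoc, h.e_mul_e, if_pos rfl]
  | right l m =>
    rw [map_mul, ha, he, mul_assoc, h.x_mul_e, ← mul_assoc, h.e_mul_e, add_sub_cancel_right,
      if_pos rfl]
  | left_zero l m j hjm =>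
    rw [map_mul, map_zero, he, ha, ← mul_assoc, h.e_mul_e, if_neg hjm, zero_mul]
  | right_zero l m j hj =>
    rw [map_mul, map_zero, ha, he, mul_assoc, h.x_mul_e, ← mul_assoc, h.e_mul_e,
      if_neg fun hm => hj (by rw [hm]; ring), zero_mul]
  | zigzag l => simp [freeLift_xgen h, h.x_mul_x_add_one]
  | socle i => simpa [freeLift_xgen h, he, toL_add_one] using h.e_mul_socle i

def lift (h : ATRelations K T q e x) : AT K T q →ₐ[K] B :=
  RingQuot.liftAlgHom K ⟨freeLift e x, fun _ _ => h.freeLift_rel⟩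

lemma lift_mk (h : ATRelations K T q e x) (a : FreeAlgebra K QGen) :
    h.lift (RingQuot.mkAlgHom K (ARel K T q) a) = freeLift e x a :=
  RingQuot.liftAlgHom_mkAlgHom_apply K _ _ a

lemma lift_Ae (h : ATRelations K T q e x) (i : ZMod 4) : h.lift (Ae K T q i) = e i := by
  simp [Ae, lift_mk, freeLift, vgen]

lemma lift_Ax (h : ATRelations K T q e x) (l : ZMod 2) : h.lift (Ax K T q l) = x l := by
  rw [Ax, lift_mk, h.freeLift_xgen]

end ATRelations

section Presentation

variable {K} {T : ℕ} {q : ZMod 4 → K}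

variable (T q) in
def AT.mk : FreeAlgebra K QGen →ₐ[K] AT K T q := RingQuot.mkAlgHom K (ARel K T q)

lemma AT.mk_rel {a b : FreeAlgebra K QGen} (h : ARel K T q a b) : AT.mk T q a = AT.mk T q b :=
  RingQuot.mkAlgHom_rel K h

@[simp]
lemma AT.mk_vgen (i : ZMod 4) : AT.mk T q (vgen K i) = Ae K T q i := rfl

@[simp]
lemma AT.mk_agen (l : ZMod 2) (m : ZMod 4) : AT.mk T q (agen K l m) = Aa K T q l m := rfl

@[simp]
lemma AT.mk_xgen (l : ZMod 2) : AT.mk T q (xgen K l) = Ax K T q l := rfl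

lemma Ae_mul_Aa (j : ZMod 4) (l : ZMod 2) (m : ZMod 4) :
    Ae K T q j * Aa K T q l m = if j = m then Aa K T q l m else 0 := by
  split_ifs with hjm
  · subst hjm
    simpa using AT.mk_rel (ARel.left (T := T) (q := q) l j)
  · simpa using AT.mk_rel (ARel.left_zero (T := T) (q := q) l m j hjm)

lemma Aa_mul_Ae (l : ZMod 2) (m j : ZMod 4) :
    Aa K T q l m * Ae K T q j = if j = m + 1 then Aa K T q l m else 0 := by
  split_ifs with hjm
  · subst hjm
    simpa using AT.mk_rel (ARel.right (T := T) (q := q) l m)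
  · simpa using AT.mk_rel (ARel.right_zero (T := T) (q := q) l m j hjm)

lemma Ax_eq_sum_Aa (l : ZMod 2) : Ax K T q l = ∑ m, Aa K T q l m := by
  rw [← AT.mk_xgen, xgen, map_sum]
  rfl

lemma Ae_mul_Ax (j : ZMod 4) (l : ZMod 2) : Ae K T q j * Ax K T q l = Aa K T q l j := by
  simp [Ax_eq_sum_Aa, Finset.mul_sum, Ae_mul_Aa]

lemma Ax_mul_Ae (l : ZMod 2) (j : ZMod 4) : Ax K T q l * Ae K T q j = Aa K T q l (j - 1) := by
  have hj (m : ZMod 4) : j = m + 1 ↔ j - 1 = m := by rw [sub_eq_iff_eq_add, eq_comm]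
  simp [Ax_eq_sum_Aa, Finset.sum_mul, Aa_mul_Ae, hj]

lemma atRelations : ATRelations K T q (Ae K T q) (Ax K T q) where
  e_mul_e i j := by simpa [apply_ite] using AT.mk_rel (ARel.vert (T := T) (q := q) i j)
  sum_e := by simpa using AT.mk_rel (ARel.sum_vert (T := T) (q := q))
  x_mul_e l j := by rw [Ax_mul_Ae, Ae_mul_Ax]
  x_mul_x_add_one l := by simpa using AT.mk_rel (ARel.zigzag (T := T) (q := q) l)
  e_mul_socle i := by simpa [toL_add_one] using AT.mk_rel (ARel.socle (T := T) (q := q) i)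

variable (K T q) in
def monomials : Set (AT K T q) :=
  Set.range fun p : ZMod 4 × ℕ × ZMod 2 => Ae K T q p.1 * Ax K T q p.2.2 ^ p.2.1

lemma monomial_mem (i : ZMod 4) (s : ℕ) (l : ZMod 2) :
    Ae K T q i * Ax K T q l ^ s ∈ monomials K T q :=
  ⟨(i, s, l), rfl⟩

lemma adjoin_monomials : Algebra.adjoin K (monomials K T q) = ⊤ := by
  have hgen : Algebra.adjoin K (Set.range (AT.mk T q ∘ FreeAlgebra.ι K)) = ⊤ := by
    rw [Set.range_comp, Algebra.adjoin_image, FreeAlgebra.adjoin_range_ι, Algebra.map_top,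
      AlgHom.range_eq_top]
    exact RingQuot.mkAlgHom_surjective K _
  refine eq_top_iff.2 (hgen ▸ Algebra.adjoin_mono ?_)
  rintro _ ⟨i | ⟨l, m⟩, rfl⟩
  · change Ae K T q i ∈ _
    simpa using monomial_mem i 0 0
  · change Aa K T q l m ∈ _
    simpa [← Ae_mul_Ax] using monomial_mem m 1 l

lemma span_monomials : Submodule.span K (monomials K T q) = ⊤ := by
  refine Submodule.span_eq_top_of_adjoin_eq_top adjoin_monomials ?_ ?_
  · rw [← atRelations.sum_e]
    exact Submodule.sum_mem _ fun i _ => Submodule.subset_span (by simpa using monomial_mem i 0 0)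
  · rintro _ ⟨⟨i, s, l⟩, rfl⟩ _ ⟨⟨j, s', l'⟩, rfl⟩
    rw [atRelations.monomial_mul_monomial]
    split_ifs
    · obtain rfl | hs := eq_or_ne s 0
      · simpa using Submodule.subset_span (monomial_mem i s' l')
      obtain rfl | hs' := eq_or_ne s' 0
      · simpa using Submodule.subset_span (monomial_mem i s l)
      obtain rfl | hl := eq_or_ne l l'
      · rw [← pow_add]
        exact Submodule.subset_span (monomial_mem i _ _)
      · simp [atRelations.x_pow_mul_x_pow hl hs hs']
    · exact zero_mem _

end Presentation

/-- The normal words `x_l^s` at a vertex: the empty word, `x_l^(k+1)` for `k ≤ 4T`, and the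
top word `x_0^(4T+2)`. -/
abbrev NormalWord (T : ℕ) : Type := Unit ⊕ (ZMod 2 × Fin (4 * T + 1)) ⊕ Unit

namespace NormalWord

def deg {T : ℕ} : NormalWord T → ℕ
  | .inl _ => 0
  | .inr (.inl (_, k)) => k + 1
  | .inr (.inr _) => 4 * T + 2

def label {T : ℕ} : NormalWord T → ZMod 2
  | .inr (.inl (l, _)) => l
  | _ => 0

lemma degree_cases (T s : ℕ) :
    s = 0 ∨ (∃ k : Fin (4 * T + 1), s = k + 1) ∨ s = 4 * T + 2 ∨ 4 * T + 2 < s := by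
  rcases s with _ | s
  · exact .inl rfl
  · by_cases hs : s < 4 * T + 1
    · exact .inr (.inl ⟨⟨s, hs⟩, rfl⟩)
    · omega

lemma sum_deg {M : Type*} [AddCommMonoid M] (T : ℕ) (f : ℕ → M) :
    ∑ w : NormalWord T, f w.deg = f 0 + 2 • ∑ k : Fin (4 * T + 1), f (k + 1) + f (4 * T + 2) := by
  simp [Fintype.sum_sum_type, Fintype.sum_prod_type, deg, add_assoc]

lemma card (T : ℕ) : Fintype.card (NormalWord T) = 8 * T + 4 := by
  rw [Fintype.card_eq_sum_ones, sum_deg T fun _ => 1]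
  simp
  ring

lemma sum_fin_succ_mod_four (T n : ℕ) :
    (∑ k : Fin (4 * T + 1), if ((k : ℕ) + 1) % 4 = n % 4 then 1 else 0) =
      T + if n % 4 = 1 then 1 else 0 := by
  have hcount : {k ∈ Finset.range (4 * T + 1) | (k + 1) % 4 = n % 4} =
      {k ∈ Finset.range (4 * T + 1) | k ≡ n + 3 [MOD 4]} := by
    refine Finset.filter_congr fun k _ => ?_
    rw [Nat.ModEq]
    omega
  rw [Fin.sum_univ_eq_sum_range (fun k => if (k + 1) % 4 = n % 4 then 1 else 0),
    Finset.sum_boole, Nat.cast_id, hcount, ← Nat.count_eq_card_filter_range,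
    Nat.count_modEq_card _ (by norm_num)]
  split_ifs <;> omega

lemma card_filter_deg_mod_four (T n : ℕ) :
    (Finset.univ.filter fun w : NormalWord T => w.deg % 4 = n % 4).card =
      if n % 4 = 0 then 2 * T + 1
      else if n % 4 = 1 then 2 * T + 2
      else if n % 4 = 2 then 2 * T + 1
      else 2 * T := by
  rw [Finset.card_filter, sum_deg T (fun s => if s % 4 = n % 4 then 1 else 0),
    sum_fin_succ_mod_four, smul_eq_mul]
  split_ifs <;> omega

lemma card_filter_vertex_add_deg (T : ℕ) (i : ZMod 4) (n : ℕ) :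
    (Finset.univ.filter fun u : ZMod 4 × NormalWord T =>
        i = u.1 ∧ u.1 + (u.2.deg : ZMod 4) = i + n).card =
      (Finset.univ.filter fun w : NormalWord T => w.deg % 4 = n % 4).card := by
  rw [Finset.card_filter, Finset.card_filter, Fintype.sum_prod_type,
    Fintype.sum_eq_single i fun j hj => by simp [Ne.symm hj]]
  simp only [true_and, add_right_inj, ZMod.natCast_eq_natCast_iff']

end NormalWord

section Model

variable {T : ℕ} {q : ZMod 4 → K}

variable (T q) in
/-- The normal form of `e_i x_l^s` in the free vector space on the normal words. -/
def normalForm (i : ZMod 4) (s : ℕ) (l : ZMod 2) : ZMod 4 × NormalWord T →₀ K :=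
  if s = 0 then Finsupp.single (i, .inl ()) 1
  else if h : s < 4 * T + 2 then Finsupp.single (i, .inr (.inl (l, ⟨s - 1, by omega⟩))) 1
  else if s = 4 * T + 2 then topCoeff K q i l • Finsupp.single (i, .inr (.inr ())) 1
  else 0

lemma normalForm_zero (i : ZMod 4) (l : ZMod 2) :
    normalForm K T q i 0 l = Finsupp.single (i, .inl ()) 1 := by
  simp [normalForm]

lemma normalForm_succ (i : ZMod 4) (k : Fin (4 * T + 1)) (l : ZMod 2) :
    normalForm K T q i (k + 1) l = Finsupp.single (i, .inr (.inl (l, k))) 1 := by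
  have hk : (k : ℕ) + 1 < 4 * T + 2 := by omega
  simp [normalForm, hk]

lemma normalForm_top (i : ZMod 4) (l : ZMod 2) :
    normalForm K T q i (4 * T + 2) l =
      topCoeff K q i l • Finsupp.single (i, .inr (.inr ())) 1 := by
  simp [normalForm]

lemma normalForm_eq_zero (i : ZMod 4) {s : ℕ} (hs : 4 * T + 2 < s) (l : ZMod 2) :
    normalForm K T q i s l = 0 := by
  rw [normalForm, if_neg (by omega), dif_neg (by omega), if_neg (by omega)]

lemma normalForm_deg_label (i : ZMod 4) (w : NormalWord T) :
    normalForm K T q i w.deg w.label = Finsupp.single (i, w) 1 := by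
  rcases w with _ | ⟨l, k⟩ | _
  · exact normalForm_zero K i _
  · exact normalForm_succ K i k l
  · simp [NormalWord.deg, NormalWord.label, normalForm_top, topCoeff]

variable (T) in
def vertexOp (i : ZMod 4) : Module.End K (ZMod 4 × NormalWord T →₀ K) :=
  Finsupp.linearCombination K fun u => if u.1 = i then Finsupp.single u 1 else 0

variable (T q) in
def xOp (l : ZMod 2) : Module.End K (ZMod 4 × NormalWord T →₀ K) :=
  Finsupp.linearCombination K fun u =>
    if u.2.deg = 0 ∨ u.2.label = l then normalForm K T q (u.1 - 1) (u.2.deg + 1) l else 0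

lemma vertexOp_single (i : ZMod 4) (u : ZMod 4 × NormalWord T) (c : K) :
    vertexOp K T i (Finsupp.single u c) = if u.1 = i then Finsupp.single u c else 0 := by
  rw [vertexOp, Finsupp.linearCombination_single]
  split_ifs <;> simp

lemma xOp_single (l : ZMod 2) (j : ZMod 4) (w : NormalWord T) (c : K) :
    xOp K T q l (Finsupp.single (j, w) c) =
      if w.deg = 0 ∨ w.label = l then c • normalForm K T q (j - 1) (w.deg + 1) l else 0 := by
  rw [xOp, Finsupp.linearCombination_single]
  split_ifs <;> simp

lemma vertexOp_normalForm (i j : ZMod 4) (s : ℕ) (l : ZMod 2) :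
    vertexOp K T i (normalForm K T q j s l) = if j = i then normalForm K T q j s l else 0 := by
  unfold normalForm
  split_ifs <;> simp [vertexOp_single, *]

lemma xOp_normalForm (l : ZMod 2) (j : ZMod 4) (s : ℕ) (l' : ZMod 2) :
    xOp K T q l (normalForm K T q j s l') =
      if s = 0 ∨ l' = l then normalForm K T q (j - 1) (s + 1) l else 0 := by
  rcases NormalWord.degree_cases T s with rfl | ⟨k, rfl⟩ | rfl | hs
  · simp [normalForm_zero, xOp_single, NormalWord.deg]
  · simp [normalForm_succ, xOp_single, NormalWord.deg, NormalWord.label]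
  · simp [normalForm_top, xOp_single, NormalWord.deg, normalForm_eq_zero]
  · simp [normalForm_eq_zero, hs, show 4 * T + 2 < s + 1 by omega]

lemma xOp_pow_normalForm (l : ZMod 2) (k : ℕ) (j : ZMod 4) (s : ℕ) (l' : ZMod 2) :
    (xOp K T q l ^ (k + 1)) (normalForm K T q j s l') =
      if s = 0 ∨ l' = l then normalForm K T q (j - (k + 1 : ℕ)) (s + (k + 1)) l else 0 := by
  induction k with
  | zero => simp [xOp_normalForm]
  | succ k ih =>
    rw [pow_succ', Module.End.mul_apply, ih]
    split_ifs
    · rw [xOp_normalForm, if_pos (.inr rfl)]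
      congr 1
      · push_cast; ring
    · rw [map_zero]

lemma xOp_pow_normalForm_zero (l : ZMod 2) (s : ℕ) (j : ZMod 4) (l' : ZMod 2) :
    (xOp K T q l ^ s) (normalForm K T q j 0 l') = normalForm K T q (j - s) s l := by
  cases s with
  | zero => simp [normalForm_zero]
  | succ s => simp [xOp_pow_normalForm]

lemma xOp_pow_top_single (l : ZMod 2) (j : ZMod 4) (w : NormalWord T) :
    (xOp K T q l ^ (4 * T + 2)) (Finsupp.single (j, w) 1) =
      if w.deg = 0 then normalForm K T q (j - (4 * T + 2 : ℕ)) (4 * T + 2) l else 0 := by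
  rw [← normalForm_deg_label, xOp_pow_normalForm]
  split_ifs with h1 h2 h2
  · simp only [h2, zero_add]
  · rw [normalForm_eq_zero _ _ (by omega)]
  · simp_all
  · rfl

lemma modelRelations (hq : ∀ i, q i ≠ 0) :
    ATRelations K T q (vertexOp K T) (xOp K T q) where
  e_mul_e i j := by
    split_ifs with hij
    · subst hij
      refine Finsupp.basisSingleOne.ext fun u => ?_
      by_cases hu : u.1 = i <;> simp [vertexOp_single, hu]
    · refine Finsupp.basisSingleOne.ext fun u => ?_
      by_cases hu : u.1 = j <;> simp [vertexOp_single, hu, Ne.symm hij]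
  sum_e := Finsupp.basisSingleOne.ext fun u => by simp [vertexOp_single]
  x_mul_e l j := Finsupp.basisSingleOne.ext fun ⟨j', w⟩ => by
    by_cases hj : j' = j <;> by_cases hw : w.deg = 0 ∨ w.label = l <;>
      simp [vertexOp_single, xOp_single, vertexOp_normalForm, hj, hw]
  x_mul_x_add_one l := Finsupp.basisSingleOne.ext fun ⟨j, w⟩ => by
    simp [xOp_single, xOp_normalForm, apply_ite]
  e_mul_socle i := Finsupp.basisSingleOne.ext fun ⟨j, w⟩ => by
    simp only [Finsupp.coe_basisSingleOne, Module.End.mul_apply, LinearMap.add_apply,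
      LinearMap.smul_apply, LinearMap.zero_apply, xOp_pow_top_single]
    split_ifs
    · set z := j - ((4 * T + 2 : ℕ) : ZMod 4)
      rw [normalForm_top, normalForm_top, smul_smul, ← add_smul, map_smul, vertexOp_single]
      split_ifs with hz
      · rw [show z = i from hz, socle_topCoeff K (hq i), zero_smul]
      · rw [smul_zero]
    · simp

def modelEval (hq : ∀ i, q i ≠ 0) : AT K T q →ₗ[K] (ZMod 4 × NormalWord T →₀ K) :=
  (LinearMap.applyₗ (∑ t, Finsupp.single (t, .inl ()) 1)).comp
    (modelRelations K hq).lift.toLinearMap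

lemma modelEval_monomial (hq : ∀ i, q i ≠ 0) (i : ZMod 4) (s : ℕ) (l : ZMod 2) :
    modelEval K hq (Ae K T q i * Ax K T q l ^ s) = normalForm K T q i s l := by
  have hone : ∑ t, Finsupp.single (t, .inl ()) 1 = ∑ t, normalForm K T q t 0 0 := by
    simp [normalForm_zero]
  rw [modelEval, LinearMap.comp_apply, AlgHom.toLinearMap_apply, LinearMap.applyₗ_apply_apply,
    hone, map_mul, map_pow, ATRelations.lift_Ae, ATRelations.lift_Ax, map_sum]
  simp [xOp_pow_normalForm_zero, vertexOp_normalForm, sub_eq_iff_eq_add]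

end Model

section Basis

variable {T : ℕ} {q : ZMod 4 → K}

variable (T q) in
def normalMonomial (u : ZMod 4 × NormalWord T) : AT K T q :=
  Ae K T q u.1 * Ax K T q u.2.label ^ u.2.deg

lemma linearIndependent_normalMonomial (hq : ∀ i, q i ≠ 0) :
    LinearIndependent K (normalMonomial K T q) := by
  refine LinearIndependent.of_comp (modelEval K hq) ?_
  convert (Finsupp.basisSingleOne (R := K) (ι := ZMod 4 × NormalWord T)).linearIndependent
    using 1
  ext1 u
  simp [normalMonomial, modelEval_monomial, normalForm_deg_label]

lemma monomial_mem_span_normalMonomial (hq : ∀ i, q i ≠ 0) (i : ZMod 4) (s : ℕ) (l : ZMod 2) :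
    Ae K T q i * Ax K T q l ^ s ∈ Submodule.span K (Set.range (normalMonomial K T q)) := by
  rcases NormalWord.degree_cases T s with rfl | ⟨k, rfl⟩ | rfl | hs
  · exact Submodule.subset_span ⟨(i, .inl ()), by simp [normalMonomial, NormalWord.deg]⟩
  · exact Submodule.subset_span ⟨(i, .inr (.inl (l, k))), rfl⟩
  · rw [atRelations.e_mul_x_pow_top (hq i)]
    exact Submodule.smul_mem _ _ (Submodule.subset_span ⟨(i, .inr (.inr ())), rfl⟩)
  · rw [atRelations.e_mul_x_pow_eq_zero (hq i) l hs]
    exact zero_mem _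

def normalBasis (hq : ∀ i, q i ≠ 0) : Module.Basis (ZMod 4 × NormalWord T) K (AT K T q) :=
  .mk (linearIndependent_normalMonomial K hq) <| by
    rw [← span_monomials, Submodule.span_le]
    rintro _ ⟨⟨i, s, l⟩, rfl⟩
    exact monomial_mem_span_normalMonomial K hq i s l

lemma normalBasis_apply (hq : ∀ i, q i ≠ 0) (u : ZMod 4 × NormalWord T) :
    normalBasis K hq u = normalMonomial K T q u :=
  Module.Basis.mk_apply _ _ _

lemma sandwich_normalMonomial (i t : ZMod 4) (u : ZMod 4 × NormalWord T) :
    sandwich K T q i t (normalMonomial K T q u) =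
      if i = u.1 ∧ u.1 + u.2.deg = t then normalMonomial K T q u else 0 :=
  atRelations.e_mul_e_mul_x_pow_mul_e i u.1 t _ _

end Basis

/-- Dimensions of the spaces `e_i A e_{i+n}` in `A = A_T(q₀,q₁,q₂,q₃)`, and the
total dimension `dim_K A = 32T + 16`. -/
theorem stmt4 (T : ℕ) (q : ZMod 4 → K) (hq : ∀ i, q i ≠ 0) :
    (∀ (i : ZMod 4) (n : ℕ),
      Module.finrank K (LinearMap.range (sandwich K T q i (i + (n : ZMod 4))))
        = if n % 4 = 0 then 2 * T + 1
          else if n % 4 = 1 then 2 * T + 2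
          else if n % 4 = 2 then 2 * T + 1
          else 2 * T) ∧
    Module.finrank K (AT K T q)
      = 4 * (2 * T + 1) + 4 * (2 * T + 2) + 4 * (2 * T + 1) + 4 * (2 * T) ∧
    Module.finrank K (AT K T q) = 32 * T + 16 := by
  have htotal : Module.finrank K (AT K T q) = 32 * T + 16 := by
    rw [Module.finrank_eq_card_basis (normalBasis K hq), Fintype.card_prod, ZMod.card,
      NormalWord.card]
    ring
  refine ⟨fun i n => ?_, by rw [htotal]; ring, htotal⟩
  rw [LinearMap.finrank_range_eq_card_of_basis (normalBasis K hq) _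
      (Finset.univ.filter fun u => i = u.1 ∧ u.1 + (u.2.deg : ZMod 4) = i + n)
      fun u => by simp [normalBasis_apply, sandwich_normalMonomial],
    NormalWord.card_filter_vertex_add_deg, NormalWord.card_filter_deg_mod_four]

end
end

section
/- Consider the 4 linear equations in unknowns v_0, v_1, v_2, v_3 over a field K: v_r − S_{u,r} v_{r+1} = 0 and S_{4m−u,r+u} v_r − v_{r+1} = 0 for 0 ≤ r ≤ 3 (indices mod 4), where u, m are fixed integers with 0 ≤ u ≤ 2m−1 or 2m+1 ≤ u ≤ 4m, and S_{a,b} := ∏_{t=0}^{a−1} q_{t+b} for units q_0,...,q_3 (indices mod 4) whose product q_0 q_1 q_2 q_3 is not a root of unity. Then the only solution is v_0 = v_1 = v_2 = v_3 = 0. -/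
/-- `S_{a,b} = ∏_{t=0}^{a-1} q_{t+b}`, indices of `q` taken mod 4, `S_{0,b} = 1`. -/
def Sprod {K : Type*} [Field K] (q : ZMod 4 → K) (a : ℕ) (b : ℤ) : K :=
  ∏ t ∈ Finset.range a, q (((t : ℤ) + b : ℤ) : ZMod 4)

lemma Sprod_add {K : Type*} [Field K] (q : ZMod 4 → K) (a b : ℕ) (c : ℤ) :
    Sprod q (a + b) c = Sprod q a c * Sprod q b (c + a) := by
  unfold Sprod
  rw [Finset.prod_range_add]
  congr 1
  refine Finset.prod_congr rfl fun t _ => ?_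
  congr 1
  push_cast
  ring

lemma Sprod_four {K : Type*} [Field K] (q : ZMod 4 → K) (c : ℤ) :
    Sprod q 4 c = q 0 * q 1 * q 2 * q 3 := by
  unfold Sprod
  have h1 : ∀ t ∈ Finset.range 4, q (((t : ℤ) + c : ℤ) : ZMod 4)
      = (fun i : ZMod 4 => q (i + (c : ZMod 4))) ((t : ℕ) : ZMod 4) := by
    intro t _
    push_cast
    rfl
  rw [Finset.prod_congr rfl h1]
  rw [← Fin.prod_univ_eq_prod_range (fun t : ℕ => (fun i : ZMod 4 => q (i + (c : ZMod 4))) ((t : ℕ) : ZMod 4)) 4]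
  have h2 : (∏ i : Fin 4, q (((i : ℕ) : ZMod 4) + (c : ZMod 4)))
      = ∏ i : ZMod 4, q (i + (c : ZMod 4)) := by
    apply Finset.prod_congr rfl
    intro i _
    exact congrArg (fun x : ZMod 4 => q (x + (c : ZMod 4))) (ZMod.natCast_rightInverse (n := 4) i)
  rw [h2]
  rw [Fintype.prod_equiv (Equiv.addRight (c : ZMod 4)) (fun i => q (i + (c : ZMod 4))) q (fun i => rfl)]
  exact Fin.prod_univ_four q

lemma Sprod_four_mul {K : Type*} [Field K] (q : ZMod 4 → K) (m : ℕ) (c : ℤ) :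
    Sprod q (4 * m) c = (q 0 * q 1 * q 2 * q 3) ^ m := by
  induction m with
  | zero => simp [Sprod]
  | succ n ih =>
      have : 4 * (n + 1) = 4 * n + 4 := by ring
      rw [this, Sprod_add, ih, Sprod_four, pow_succ]

/-- The system `v_r - S_{u,r} v_{r+1} = 0`, `S_{4m-u,r+u} v_r - v_{r+1} = 0`
(indices of `v` mod 4) has only the trivial solution when `q₀q₁q₂q₃` is not a
root of unity and `0 ≤ u ≤ 2m-1` or `2m+1 ≤ u ≤ 4m`. -/
theorem stmt12 {K : Type*} [Field K] (q : ZMod 4 → K) (hq : ∀ i, q i ≠ 0)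
    (hroot : ¬ ∃ n : ℕ, 0 < n ∧ (q 0 * q 1 * q 2 * q 3) ^ n = 1)
    (m u : ℕ) (hu : u + 1 ≤ 2 * m ∨ (2 * m + 1 ≤ u ∧ u ≤ 4 * m))
    (v : ZMod 4 → K)
    (h1 : ∀ r : ZMod 4, v r - Sprod q u (r.val : ℤ) * v (r + 1) = 0)
    (h2 : ∀ r : ZMod 4, Sprod q (4 * m - u) ((r.val : ℤ) + (u : ℤ)) * v r - v (r + 1) = 0) :
    ∀ r : ZMod 4, v r = 0 := by
  intro r
  have hm : 0 < m := by omega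
  have hu4 : u ≤ 4 * m := by omega
  have e1 : v r = Sprod q u (r.val : ℤ) * v (r + 1) := by
    have := h1 r; linear_combination this
  have e2 : v (r + 1) = Sprod q (4 * m - u) ((r.val : ℤ) + (u : ℤ)) * v r := by
    have := h2 r; linear_combination -this
  have prodeq : Sprod q u (r.val : ℤ) * Sprod q (4 * m - u) ((r.val : ℤ) + (u : ℤ))
      = (q 0 * q 1 * q 2 * q 3) ^ m := by
    rw [← Sprod_add, Nat.add_sub_cancel' hu4, Sprod_four_mul]
  have key : v r = (q 0 * q 1 * q 2 * q 3) ^ m * v r := by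
    calc v r = Sprod q u (r.val : ℤ) * v (r + 1) := e1
    _ = Sprod q u (r.val : ℤ) * (Sprod q (4 * m - u) ((r.val : ℤ) + (u : ℤ)) * v r) := by
        rw [← e2]
    _ = (q 0 * q 1 * q 2 * q 3) ^ m * v r := by rw [← mul_assoc, prodeq]
  have hne : (q 0 * q 1 * q 2 * q 3) ^ m ≠ 1 := fun h => hroot ⟨m, hm, h⟩
  have : ((q 0 * q 1 * q 2 * q 3) ^ m - 1) * v r = 0 := by linear_combination -key
  rcases mul_eq_zero.mp this with h | h
  · exact absurd (by linear_combination h) hne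
  · exact h
end
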